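/- (Correctness of the parallel step of the parallel replica algorithm.) Let N ≥ 1, let S be a measurable space, and let (T_i, Y_i)_{1 ≤ i ≤ N} be i.i.d. random pairs with values in (0,∞) × S such that T_i is exponentially distributed with rate λ₁ > 0 and T_i is independent of Y_i. Let I be the (almost surely unique) index at which min_{1 ≤ i ≤ N} T_i is attained. Then the pair (N · T_I, Y_I) has the same law as (T_1, Y_1); in particular N · T_I is exponentially distributed with rate λ₁, Y_I has the same law as Y_1, and N · T_I is independent of Y_I. -/

import Mathlib

/-!
On the event `{I = i}`, which a.s. equals `{T_j > T_i for all j ≠ i}`, independence of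
`(T_i, Y_i)` from the other clocks and the survival function `P(T > t) = e^{-λt}` give
`P(N T_I ∈ A, Y_I ∈ B) = N ∫_{N t ∈ A} e^{-(N-1)λt} dExp_λ(t) · ν(B)`, with `ν` the law of `Y_1`.
Since `λe^{-λt} · e^{-(N-1)λt} = λe^{-λNt}`, the substitution `u = N t` turns the right-hand side
into `Exp_λ(A) ν(B)`. Hence `(N T_I, Y_I)` has law `Exp_λ ⊗ ν`, which is also the law of
`(T_1, Y_1)` because `T_1` and `Y_1` are independent.
-/

open MeasureTheory ProbabilityTheory Set Real
open scoped ENNReal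

namespace MeasureTheory

lemma measure_Ioi_eq_one_of_nonpos {μ : Measure ℝ} [IsProbabilityMeasure μ] (h0 : μ (Ioi 0) = 1)
    {a : ℝ} (ha : a ≤ 0) : μ (Ioi a) = 1 :=
  le_antisymm prob_le_one (h0 ▸ measure_mono (Ioi_subset_Ioi ha))

lemma setLIntegral_prod_comp_fst {α β : Type*} [MeasurableSpace α] [MeasurableSpace β]
    {μ : Measure α} {ν : Measure β} [SFinite μ] [SFinite ν] {f : α → ℝ≥0∞} (hf : Measurable f)
    (s : Set α) (t : Set β) :
    ∫⁻ x in s ×ˢ t, f x.1 ∂μ.prod ν = (∫⁻ a in s, f a ∂μ) * ν t := by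
  rw [setLIntegral_prod (fun x => f x.1) (hf.comp measurable_fst).aemeasurable]
  simp only [setLIntegral_const]
  exact lintegral_mul_const _ hf

lemma measurable_eval_index {Ω ι α : Type*} [MeasurableSpace Ω] [MeasurableSpace α] [Countable ι]
    [MeasurableSpace ι] [MeasurableSingletonClass ι] {X : ι → Ω → α} (hX : ∀ i, Measurable (X i))
    {I : Ω → ι} (hI : Measurable I) : Measurable fun ω => X (I ω) ω :=
  (measurable_from_prod_countable_left (f := fun p : Ω × ι => X p.2 p.1) hX).comp
    (measurable_id.prodMk hI)

end MeasureTheory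

namespace ProbabilityTheory

lemma expMeasure_eq_withDensity (r : ℝ) : expMeasure r = volume.withDensity (exponentialPDF r) :=
  rfl

lemma ae_nonneg_expMeasure (r : ℝ) : ∀ᵐ t ∂expMeasure r, 0 ≤ t := by
  have hpdf : Measurable (exponentialPDF r) := (measurable_exponentialPDFReal r).ennreal_ofReal
  rw [expMeasure_eq_withDensity, ae_withDensity_iff hpdf]
  exact .of_forall fun t ht => not_lt.1 fun hneg => ht (exponentialPDF_of_neg hneg)

lemma expMeasure_Ioi {r a : ℝ} (hr : 0 < r) (ha : 0 ≤ a) :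
    expMeasure r (Ioi a) = ENNReal.ofReal (exp (-r * a)) := by
  have := isProbabilityMeasure_expMeasure hr
  have hexp_le : exp (-(r * a)) ≤ 1 := exp_le_one_iff.2 (by nlinarith)
  rw [← compl_Iic, prob_compl_eq_one_sub measurableSet_Iic, ← ofReal_cdf, cdf_expMeasure_eq hr,
    if_pos ha, ← ENNReal.ofReal_one, ← ENNReal.ofReal_sub _ (sub_nonneg.2 hexp_le)]
  ring_nf

lemma eq_expMeasure_of_measure_Ioi {μ : Measure ℝ} [IsProbabilityMeasure μ] {r : ℝ} (hr : 0 < r)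
    (h : ∀ a ≥ 0, μ (Ioi a) = ENNReal.ofReal (exp (-r * a))) : μ = expMeasure r := by
  have := isProbabilityMeasure_expMeasure hr
  refine ext_of_generate_finite _ (borel_eq_generateFrom_Ioi ℝ) isPiSystem_Ioi ?_ (by simp)
  rintro _ ⟨a, rfl⟩
  rcases le_total 0 a with ha | ha
  · rw [h a ha, expMeasure_Ioi hr ha]
  · rw [measure_Ioi_eq_one_of_nonpos (by simpa using h 0 le_rfl) ha,
      measure_Ioi_eq_one_of_nonpos (by simpa using expMeasure_Ioi hr le_rfl) ha]

lemma exponentialPDF_mul_exp (r : ℝ) {c : ℝ} (hc : 0 < c) (t : ℝ) :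
    exponentialPDF r t * ENNReal.ofReal (exp (-((c - 1) * r * t))) = exponentialPDF r (c * t) := by
  rcases lt_or_ge t 0 with ht | ht
  · rw [exponentialPDF_of_neg ht, exponentialPDF_of_neg (mul_neg_of_pos_of_neg hc ht), zero_mul]
  · rw [exponentialPDF_of_nonneg ht, exponentialPDF_of_nonneg (by positivity),
      ← ENNReal.ofReal_mul' (exp_pos _).le, mul_assoc, ← exp_add]
    ring_nf

lemma ofReal_mul_setLIntegral_exp_expMeasure (r : ℝ) {c : ℝ} (hc : 0 < c) {A : Set ℝ}
    (hA : MeasurableSet A) :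
    ENNReal.ofReal c * ∫⁻ t in (c * ·) ⁻¹' A, ENNReal.ofReal (exp (-((c - 1) * r * t)))
      ∂expMeasure r = expMeasure r A := by
  have hpdf : Measurable (exponentialPDF r) := (measurable_exponentialPDFReal r).ennreal_ofReal
  have hmul : Measurable (c * ·) := measurable_const_mul c
  rw [expMeasure_eq_withDensity,
    setLIntegral_withDensity_eq_setLIntegral_mul _ hpdf (by fun_prop) (hmul hA)]
  simp only [Pi.mul_apply, exponentialPDF_mul_exp r hc]
  rw [← setLIntegral_map hA hpdf hmul, Real.map_volume_mul_left hc.ne', Measure.restrict_smul,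
    lintegral_smul_measure, smul_eq_mul, ← mul_assoc, abs_of_pos (inv_pos.2 hc),
    ← ENNReal.ofReal_mul hc.le, mul_inv_cancel₀ hc.ne', ENNReal.ofReal_one, one_mul,
    withDensity_apply _ hA]

variable {Ω S ι : Type*} [MeasurableSpace Ω] [MeasurableSpace S] {P : Measure Ω}

lemma IndepFun.measure_preimage_prodMk_eq_lintegral {α β : Type*} [MeasurableSpace α]
    [MeasurableSpace β] [IsFiniteMeasure P] {X : Ω → α} {W : Ω → β} (h : IndepFun X W P)
    (hX : Measurable X) (hW : Measurable W) {C : Set (α × β)} (hC : MeasurableSet C) :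
    P ((fun ω => (X ω, W ω)) ⁻¹' C) = ∫⁻ x, P.map W (Prod.mk x ⁻¹' C) ∂P.map X := by
  rw [← Measure.map_apply (hX.prodMk hW) hC,
    h.map_prod_eq_prod_map_map hX.aemeasurable hW.aemeasurable, Measure.prod_apply hC]

lemma indepFun_of_map_prodMk_eq_prod {α β : Type*} [MeasurableSpace α] [MeasurableSpace β]
    [IsFiniteMeasure P] {μ : Measure α} {ν : Measure β} [IsProbabilityMeasure μ]
    [IsProbabilityMeasure ν] {X : Ω → α} {W : Ω → β} (hX : Measurable X) (hW : Measurable W)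
    (h : P.map (fun ω => (X ω, W ω)) = μ.prod ν) : IndepFun X W P := by
  have hμ : P.map X = μ := by rw [← Measure.fst_map_prodMk hW, h, Measure.fst_prod]
  have hν : P.map W = ν := by rw [← Measure.snd_map_prodMk hX, h, Measure.snd_prod]
  rw [indepFun_iff_map_prod_eq_prod_map_map hX.aemeasurable hW.aemeasurable, hμ, hν, h]

variable {T : ι → Ω → ℝ} {Y : ι → Ω → S}

lemma preimage_singleton_ae_eq_setOf_forall_lt {I : Ω → ι}
    (hI : ∀ᵐ ω ∂P, ∀ i ≠ I ω, T (I ω) ω < T i ω) (i : ι) :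
    I ⁻¹' {i} =ᵐ[P] {ω | ∀ j ≠ i, T i ω < T j ω} := by
  filter_upwards [hI] with ω hω
  refine propext ⟨?_, fun h => by_contra fun hne => ?_⟩
  · rintro rfl
    exact hω
  · exact lt_asymm (h (I ω) hne) (hω i (Ne.symm hne))

lemma measure_setOf_mem_argmin_eq_sum [Fintype ι] [MeasurableSpace ι]
    [MeasurableSingletonClass ι] {I : Ω → ι} (hImeas : Measurable I)
    (hI : ∀ᵐ ω ∂P, ∀ i ≠ I ω, T (I ω) ω < T i ω) (E : ι → Set Ω) :
    P {ω | ω ∈ E (I ω)} = ∑ i, P (E i ∩ {ω | ∀ j ≠ i, T i ω < T j ω}) := by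
  have hfib : ∀ i, MeasurableSet (I ⁻¹' {i}) := fun i => hImeas (measurableSet_singleton i)
  calc P {ω | ω ∈ E (I ω)}
      = ∑ i, P.restrict {ω | ω ∈ E (I ω)} (I ⁻¹' {i}) := by
        rw [sum_measure_preimage_singleton _ fun i _ => hfib i, Finset.coe_univ, preimage_univ,
          Measure.restrict_apply_univ]
    _ = ∑ i, P (E i ∩ I ⁻¹' {i}) := by
        refine Finset.sum_congr rfl fun i _ => ?_
        rw [Measure.restrict_apply (hfib i), inter_comm]
        congr 1
        ext ω
        simp only [mem_inter_iff, mem_preimage, mem_singleton_iff, mem_ofPred_eq]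
        constructor <;> rintro ⟨h, rfl⟩ <;> exact ⟨h, rfl⟩
    _ = ∑ i, P (E i ∩ {ω | ∀ j ≠ i, T i ω < T j ω}) :=
        Finset.sum_congr rfl fun i _ =>
          measure_congr ((ae_eq_refl _).inter (preimage_singleton_ae_eq_setOf_forall_lt hI i))

lemma measure_mem_and_forall_lt_eq_setLIntegral [Fintype ι] [IsFiniteMeasure P]
    (hT : ∀ i, Measurable (T i)) (hY : ∀ i, Measurable (Y i))
    (hindep : iIndepFun (fun i ω => (T i ω, Y i ω)) P) (i : ι) {C : Set (ℝ × S)}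
    (hC : MeasurableSet C) :
    P {ω | (T i ω, Y i ω) ∈ C ∧ ∀ j ≠ i, T i ω < T j ω}
      = ∫⁻ x in C, P {ω | ∀ j ≠ i, x.1 < T j ω} ∂P.map (fun ω => (T i ω, Y i ω)) := by
  classical
  let W : Ω → ({i}ᶜ : Finset ι) → ℝ := fun ω j => T j ω
  have hW : Measurable W := measurable_pi_lambda _ fun j => hT j
  have hXW : IndepFun (fun ω => (T i ω, Y i ω)) W P :=
    (hindep.indepFun_finset {i} {i}ᶜ disjoint_compl_right fun j => (hT j).prodMk (hY j)).comp
      (φ := fun v => v ⟨i, Finset.mem_singleton_self i⟩) (ψ := fun w j => (w j).1)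
      (by fun_prop) (by fun_prop)
  let D : Set ((ℝ × S) × (({i}ᶜ : Finset ι) → ℝ)) :=
    Prod.fst ⁻¹' C ∩ ⋂ j, {p | p.1.1 < p.2 j}
  have hD : MeasurableSet D :=
    (measurable_fst hC).inter (.iInter fun j => measurableSet_lt (by fun_prop) (by fun_prop))
  have hpre : {ω | (T i ω, Y i ω) ∈ C ∧ ∀ j ≠ i, T i ω < T j ω}
      = (fun ω => ((T i ω, Y i ω), W ω)) ⁻¹' D := by
    ext ω
    simp [W, D]
  have hslice : ∀ x, P.map W (Prod.mk x ⁻¹' D)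
      = C.indicator (fun x => P {ω | ∀ j ≠ i, x.1 < T j ω}) x := by
    intro x
    by_cases hx : x ∈ C
    · rw [indicator_of_mem hx, Measure.map_apply hW (measurable_prodMk_left hD)]
      congr 1
      ext ω
      simp [W, D, hx]
    · rw [indicator_of_notMem hx, show Prod.mk x ⁻¹' D = ∅ by ext; simp [D, hx], measure_empty]
  rw [hpre, hXW.measure_preimage_prodMk_eq_lintegral ((hT i).prodMk (hY i)) hW hD,
    ← lintegral_indicator hC]
  simp only [hslice]

lemma measure_forall_ne_lt_eq_exp [Fintype ι] {r : ℝ} (hindep : iIndepFun T P)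
    (hsurv : ∀ j, ∀ t ≥ (0 : ℝ), P {ω | t < T j ω} = ENNReal.ofReal (exp (-r * t)))
    (i : ι) {t : ℝ} (ht : 0 ≤ t) :
    P {ω | ∀ j ≠ i, t < T j ω}
      = ENNReal.ofReal (exp (-(((Fintype.card ι : ℝ) - 1) * r * t))) := by
  classical
  have hinter : {ω | ∀ j ≠ i, t < T j ω} = ⋂ j ∈ ({i}ᶜ : Finset ι), T j ⁻¹' Ioi t := by
    ext ω
    simp
  have hcard : ((({i}ᶜ : Finset ι).card : ℕ) : ℝ) = (Fintype.card ι : ℝ) - 1 := by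
    rw [Finset.card_compl, Finset.card_singleton, Nat.cast_sub (Fintype.card_pos_iff.2 ⟨i⟩)]
    simp
  rw [hinter, hindep.measure_inter_preimage_eq_mul _ fun _ _ => measurableSet_Ioi]
  simp only [preimage, mem_Ioi]
  rw [Finset.prod_congr rfl fun j _ => hsurv j t ht, Finset.prod_const,
    ← ENNReal.ofReal_pow (exp_pos _).le, ← exp_nat_mul, hcard]
  ring_nf

section ExponentialClocks

variable [Fintype ι] [IsProbabilityMeasure P] {ν : Measure S} [IsProbabilityMeasure ν] {r : ℝ}

lemma measure_mem_prod_and_forall_lt_eq (hr : 0 < r) (hT : ∀ i, Measurable (T i))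
    (hY : ∀ i, Measurable (Y i)) (hindep : iIndepFun (fun i ω => (T i ω, Y i ω)) P)
    (hlaw : ∀ i, P.map (fun ω => (T i ω, Y i ω)) = (expMeasure r).prod ν)
    (i : ι) (c : ℝ) {A : Set ℝ} {B : Set S} (hA : MeasurableSet A) (hB : MeasurableSet B) :
    P ({ω | (c * T i ω, Y i ω) ∈ A ×ˢ B} ∩ {ω | ∀ j ≠ i, T i ω < T j ω})
      = (∫⁻ t in (c * ·) ⁻¹' A,
          ENNReal.ofReal (exp (-(((Fintype.card ι : ℝ) - 1) * r * t))) ∂expMeasure r) * ν B := by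
  have hsurv : ∀ j, ∀ t ≥ (0 : ℝ), P {ω | t < T j ω} = ENNReal.ofReal (exp (-r * t)) := by
    intro j t ht
    rw [← expMeasure_Ioi hr ht, ← Measure.fst_prod (μ := expMeasure r) (ν := ν), ← hlaw j,
      Measure.fst_map_prodMk (hY j), Measure.map_apply (hT j) measurableSet_Ioi]
    rfl
  have := isProbabilityMeasure_expMeasure hr
  have hTindep : iIndepFun T P := hindep.comp (fun _ => Prod.fst) fun _ => measurable_fst
  calc _ = ∫⁻ x in ((c * ·) ⁻¹' A) ×ˢ B, P {ω | ∀ j ≠ i, x.1 < T j ω}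
        ∂(expMeasure r).prod ν := by
        rw [← hlaw i, ← measure_mem_and_forall_lt_eq_setLIntegral hT hY hindep i
          ((measurable_const_mul c hA).prod hB)]
        rfl
    _ = ∫⁻ x in ((c * ·) ⁻¹' A) ×ˢ B,
          ENNReal.ofReal (exp (-(((Fintype.card ι : ℝ) - 1) * r * x.1)))
        ∂(expMeasure r).prod ν := by
        refine lintegral_congr_ae (ae_restrict_of_ae ?_)
        filter_upwards [Measure.quasiMeasurePreserving_fst.ae (ae_nonneg_expMeasure r)]
          with x hx using measure_forall_ne_lt_eq_exp hTindep hsurv i hx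
    _ = _ := setLIntegral_prod_comp_fst
        (f := fun t => ENNReal.ofReal (exp (-(((Fintype.card ι : ℝ) - 1) * r * t))))
        (by fun_prop) _ _

theorem map_argmin_eq_expMeasure_prod [MeasurableSpace ι] [MeasurableSingletonClass ι]
    (hr : 0 < r) (hT : ∀ i, Measurable (T i)) (hY : ∀ i, Measurable (Y i))
    (hindep : iIndepFun (fun i ω => (T i ω, Y i ω)) P)
    (hlaw : ∀ i, P.map (fun ω => (T i ω, Y i ω)) = (expMeasure r).prod ν)
    {I : Ω → ι} (hImeas : Measurable I) (hI : ∀ᵐ ω ∂P, ∀ i ≠ I ω, T (I ω) ω < T i ω) :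
    P.map (fun ω => ((Fintype.card ι : ℝ) * T (I ω) ω, Y (I ω) ω)) = (expMeasure r).prod ν := by
  have := isProbabilityMeasure_expMeasure hr
  have : Nonempty ι := (nonempty_of_isProbabilityMeasure P).map I
  set c : ℝ := (Fintype.card ι : ℝ)
  have hc : 0 < c := Nat.cast_pos.2 Fintype.card_pos
  refine (Measure.prod_eq fun A B hA hB => ?_).symm
  rw [Measure.map_apply (((measurable_eval_index hT hImeas).const_mul c).prodMk
    (measurable_eval_index hY hImeas)) (hA.prod hB)]
  calc P _ = ∑ i, P ({ω | (c * T i ω, Y i ω) ∈ A ×ˢ B} ∩ {ω | ∀ j ≠ i, T i ω < T j ω}) :=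
        measure_setOf_mem_argmin_eq_sum hImeas hI fun i => {ω | (c * T i ω, Y i ω) ∈ A ×ˢ B}
    _ = ENNReal.ofReal c * (∫⁻ t in (c * ·) ⁻¹' A, ENNReal.ofReal (exp (-((c - 1) * r * t)))
          ∂expMeasure r) * ν B := by
        simp only [measure_mem_prod_and_forall_lt_eq hr hT hY hindep hlaw _ c hA hB,
          Finset.sum_const, Finset.card_univ, nsmul_eq_mul, c, ENNReal.ofReal_natCast, mul_assoc]
    _ = expMeasure r A * ν B := by rw [ofReal_mul_setLIntegral_exp_expMeasure r hc hA]

end ExponentialClocks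

end ProbabilityTheory

theorem parallel_replica_parallel_step_general
    {Ω : Type*} [MeasurableSpace Ω] (P : Measure Ω) [IsProbabilityMeasure P]
    {S : Type*} [MeasurableSpace S]
    (N : ℕ) (hN : 1 ≤ N) (lam₁ : ℝ) (hlam : 0 < lam₁)
    (T : Fin N → Ω → ℝ) (Y : Fin N → Ω → S)
    (hTmeas : ∀ i, Measurable (T i)) (hYmeas : ∀ i, Measurable (Y i))
    -- the pairs `(T_i, Y_i)` are independent ...
    (hindep : iIndepFun
      (fun i => fun ω => (T i ω, Y i ω)) P)
    -- ... and identically distributed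
    (hid : ∀ i, Measure.map (fun ω => (T i ω, Y i ω)) P
      = Measure.map (fun ω => (T ⟨0, hN⟩ ω, Y ⟨0, hN⟩ ω)) P)
    -- each `T_i` is exponentially distributed with rate `λ₁`
    (hexp : ∀ i, ∀ t ≥ (0:ℝ), P {ω | t < T i ω} = ENNReal.ofReal (Real.exp (-lam₁ * t)))
    -- `T_i` is independent of `Y_i`
    (hTY : ∀ i, IndepFun (T i) (Y i) P)
    -- `I` selects the index at which the minimum of the `T_i` is attained (a.s. unique)
    (I : Ω → Fin N) (hImeas : Measurable I)
    (hIunique : ∀ᵐ ω ∂P, ∀ i, i ≠ I ω → T (I ω) ω < T i ω) :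
    Measure.map (fun ω => ((N : ℝ) * T (I ω) ω, Y (I ω) ω)) P
        = Measure.map (fun ω => (T ⟨0, hN⟩ ω, Y ⟨0, hN⟩ ω)) P
      ∧ (∀ t ≥ (0:ℝ), P {ω | t < (N : ℝ) * T (I ω) ω}
          = ENNReal.ofReal (Real.exp (-lam₁ * t)))
      ∧ Measure.map (fun ω => Y (I ω) ω) P = Measure.map (Y ⟨0, hN⟩) P
      ∧ IndepFun (fun ω => (N : ℝ) * T (I ω) ω) (fun ω => Y (I ω) ω) P := by
  set i₀ : Fin N := ⟨0, hN⟩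
  have := isProbabilityMeasure_expMeasure hlam
  have := Measure.isProbabilityMeasure_map (hTmeas i₀).aemeasurable (μ := P)
  have := Measure.isProbabilityMeasure_map (hYmeas i₀).aemeasurable (μ := P)
  have hlawT : P.map (T i₀) = expMeasure lam₁ := eq_expMeasure_of_measure_Ioi hlam fun t ht => by
    rw [Measure.map_apply (hTmeas i₀) measurableSet_Ioi]
    exact hexp i₀ t ht
  have hlaw : P.map (fun ω => (T i₀ ω, Y i₀ ω)) = (expMeasure lam₁).prod (P.map (Y i₀)) := by
    rw [(hTY i₀).map_prod_eq_prod_map_map (hTmeas i₀).aemeasurable (hYmeas i₀).aemeasurable,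
      hlawT]
  have hZ : P.map (fun ω => ((N : ℝ) * T (I ω) ω, Y (I ω) ω))
      = (expMeasure lam₁).prod (P.map (Y i₀)) := by
    simpa using map_argmin_eq_expMeasure_prod hlam hTmeas hYmeas hindep
      (fun i => (hid i).trans hlaw) hImeas hIunique
  have hTI : Measurable fun ω => (N : ℝ) * T (I ω) ω :=
    (measurable_eval_index hTmeas hImeas).const_mul _
  have hYI : Measurable fun ω => Y (I ω) ω := measurable_eval_index hYmeas hImeas
  refine ⟨hZ.trans hlaw.symm, fun t ht => ?_, ?_, indepFun_of_map_prodMk_eq_prod hTI hYI hZ⟩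
  · rw [← expMeasure_Ioi hlam ht, ← Measure.fst_prod (μ := expMeasure lam₁) (ν := P.map (Y i₀)),
      ← hZ, Measure.fst_map_prodMk hYI, Measure.map_apply hTI measurableSet_Ioi]
    rfl
  · rw [← Measure.snd_map_prodMk hTI, hZ, Measure.snd_prod]

/-- **Correctness of the parallel step of the parallel replica algorithm.** Let
`(T_i, Y_i)_{1 ≤ i ≤ N}` be i.i.d. random pairs with values in `(0,∞) × S`, with `T_i`
exponentially distributed with rate `λ₁ > 0` (that is, `ℙ(T_i > t) = e^{−λ₁ t}` for `t ≥ 0`)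
and `T_i` independent of `Y_i`. If `I` is the (a.s. unique) index realizing
`min_{1 ≤ i ≤ N} T_i`, then `(N⋅T_I, Y_I)` has the same law as `(T_1, Y_1)`; in particular
`N⋅T_I` is exponential with rate `λ₁`, `Y_I` has the same law as `Y_1`, and `N⋅T_I` is
independent of `Y_I`. -/
theorem parallel_replica_parallel_step
    {Ω : Type*} [MeasurableSpace Ω] (P : Measure Ω) [IsProbabilityMeasure P]
    {S : Type*} [MeasurableSpace S]
    (N : ℕ) (hN : 1 ≤ N) (lam₁ : ℝ) (hlam : 0 < lam₁)
    (T : Fin N → Ω → ℝ) (Y : Fin N → Ω → S)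
    (hTmeas : ∀ i, Measurable (T i)) (hYmeas : ∀ i, Measurable (Y i))
    -- the pairs take values in `(0,∞) × S`
    (hTpos : ∀ i ω, 0 < T i ω)
    -- the pairs `(T_i, Y_i)` are independent ...
    (hindep : iIndepFun
      (fun i => fun ω => (T i ω, Y i ω)) P)
    -- ... and identically distributed
    (hid : ∀ i, Measure.map (fun ω => (T i ω, Y i ω)) P
      = Measure.map (fun ω => (T ⟨0, hN⟩ ω, Y ⟨0, hN⟩ ω)) P)
    -- each `T_i` is exponentially distributed with rate `λ₁`
    (hexp : ∀ i, ∀ t ≥ (0:ℝ), P {ω | t < T i ω} = ENNReal.ofReal (Real.exp (-lam₁ * t)))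
    -- `T_i` is independent of `Y_i`
    (hTY : ∀ i, IndepFun (T i) (Y i) P)
    -- `I` selects the index at which the minimum of the `T_i` is attained (a.s. unique)
    (I : Ω → Fin N) (hImeas : Measurable I)
    (hI : ∀ᵐ ω ∂P, ∀ i, T (I ω) ω ≤ T i ω)
    (hIunique : ∀ᵐ ω ∂P, ∀ i, i ≠ I ω → T (I ω) ω < T i ω) :
    Measure.map (fun ω => ((N : ℝ) * T (I ω) ω, Y (I ω) ω)) P
        = Measure.map (fun ω => (T ⟨0, hN⟩ ω, Y ⟨0, hN⟩ ω)) P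
      ∧ (∀ t ≥ (0:ℝ), P {ω | t < (N : ℝ) * T (I ω) ω}
          = ENNReal.ofReal (Real.exp (-lam₁ * t)))
      ∧ Measure.map (fun ω => Y (I ω) ω) P = Measure.map (Y ⟨0, hN⟩) P
      ∧ IndepFun (fun ω => (N : ℝ) * T (I ω) ω) (fun ω => Y (I ω) ω) P :=
  parallel_replica_parallel_step_general P N hN lam₁ hlam T Y hTmeas hYmeas hindep hid hexp hTY I
    hImeas hIunique
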